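/- Let B = [[B₁,B₃],[B₂,B₄]] be an (n+m)×(n+m) skew-symmetrizable integer matrix with B₂ ∈ M_{m×n}(ℤ_{≥0}), and suppose (k_1,…,k_s), k_i ∈ {1,…,n}, is a maximal green sequence of B₁. Then after applying μ_{k_s}⋯μ_{k_1} to [B; I_{n+m}], the resulting matrix has block form in which: the lower-left m×n block B₂' of the principal part is entrywise ≤ 0, the corresponding upper-right n×m block B₃' is entrywise ≥ 0, and the C-matrix part equals diag(C₁, I_m) with C₁ ∈ M_{n×n}(ℤ_{≤0}). -/

import Mathlib

/-!
Only indices among the first `n` are mutated, and the mutation rule at `k` only reads row and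
column `k`, so the rows and columns of `[B; I]` indexed by `1, …, n` evolve exactly as `[B₁; I]`:
their C-block is the C-matrix `C₁` of `B₁`. Along a green sequence the whole matrix keeps the shape
`[[B₁', B₃'], [B₂ C₁, B₄'], [C₁, 0], [0, I]]`. Indeed, at a green `k` the column `k` of `B₂ C₁` is
`≥ 0` because `B₂ ≥ 0`, so by skew-symmetrizability row `k` of `B₃'` is `≤ 0`; this keeps the
upper-right C-block zero, and the mutation acts on the rows of `B₂'` by the same linear map as on
the rows of `C₁`, so `B₂' = B₂ C₁` persists.
At the end `C₁ ≤ 0`, hence `B₂' = B₂ C₁ ≤ 0` and, again by skew-symmetrizability, `B₃' ≥ 0`.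
-/

variable {ι : Type} [Fintype ι] [DecidableEq ι]

/-- Mutation in direction `k` of a `2N × N` integer matrix, rows indexed by
`ι ⊕ ι` (the principal part is the `Sum.inl` block). -/
def mutate (k : ι) (B : Matrix (ι ⊕ ι) ι ℤ) : Matrix (ι ⊕ ι) ι ℤ :=
  fun i j =>
    if i = Sum.inl k ∨ j = k then -B i j
    else B i j + Int.sign (B i k) * max (B i k * B (Sum.inl k) j) 0

/-- Apply a sequence of mutations `μ_{k_s} ⋯ μ_{k_1}` (the list is `[k_1, …, k_s]`). -/
def mutateSeq (L : List ι) (B : Matrix (ι ⊕ ι) ι ℤ) : Matrix (ι ⊕ ι) ι ℤ :=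
  L.foldl (fun M k => mutate k M) B

/-- The C-matrix of `B` along the mutation sequence `L`: the lower block of
the mutation of `[B; I]`. -/
def Cmat (B : Matrix ι ι ℤ) (L : List ι) : Matrix ι ι ℤ :=
  fun i j => mutateSeq L (Matrix.fromRows B 1) (Sum.inr i) j

/-- A column index `j` is green in the C-matrix along `L` if its column is entrywise `≥ 0`. -/
def IsGreen (B : Matrix ι ι ℤ) (L : List ι) (j : ι) : Prop :=
  ∀ i, 0 ≤ Cmat B L i j

/-- `L` is a green sequence: each mutation occurs at a green index of the current C-matrix. -/
def IsGreenSeq (B : Matrix ι ι ℤ) (L : List ι) : Prop :=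
  ∀ (t : ℕ) (h : t < L.length), IsGreen B (L.take t) (L.get ⟨t, h⟩)

/-- `L` is a green-to-red sequence: the final C-matrix is entrywise `≤ 0`. -/
def IsGreenToRed (B : Matrix ι ι ℤ) (L : List ι) : Prop :=
  ∀ i j, Cmat B L i j ≤ 0

/-- `L` is a maximal green sequence of `B`. -/
def IsMGS (B : Matrix ι ι ℤ) (L : List ι) : Prop :=
  IsGreenSeq B L ∧ IsGreenToRed B L


lemma two_mul_sign_mul_max (x y : ℤ) :
    2 * (x.sign * max (x * y) 0) = |x| * y + x * |y| := by
  rcases lt_trichotomy x 0 with hx | rfl | hx <;>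
  rcases lt_trichotomy y 0 with hy | rfl | hy <;>
  simp only [Int.sign_eq_neg_one_of_neg, Int.sign_eq_one_of_pos, abs_of_neg, abs_of_pos,
    Int.sign_zero, abs_zero, mul_zero, zero_mul, max_self, *] <;>
  first
  | rw [max_eq_left (by nlinarith)]; ring
  | rw [max_eq_right (by nlinarith)]; ring
  | ring

lemma mul_abs_eq_of_mul_eq_neg {a b x y : ℤ} (ha : 0 ≤ a) (hb : 0 ≤ b)
    (h : a * x = -(b * y)) :
    a * |x| = b * |y| := by
  simpa [abs_mul, abs_of_nonneg ha, abs_of_nonneg hb] using congrArg abs h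

section

variable {κ : Type} [DecidableEq κ]

lemma mutateSeq_cons (k : κ) (L : List κ) (M : Matrix (κ ⊕ κ) κ ℤ) :
    mutateSeq (k :: L) M = mutateSeq L (mutate k M) := rfl

theorem mutate_skew {S : κ → ℤ} (hS : ∀ i, 0 ≤ S i) {M : Matrix (κ ⊕ κ) κ ℤ}
    (h : ∀ p q, S p * M (.inl p) q = -(S q * M (.inl q) p)) (k p q : κ) :
    S p * mutate k M (.inl p) q = -(S q * mutate k M (.inl q) p) := by
  by_cases hpq : p = k ∨ q = k
  · rcases hpq with rfl | rfl <;> simp only [mutate, true_or, or_true, ite_true] <;>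
      linarith [h p q]
  · obtain ⟨hp, hq⟩ := not_or.mp hpq
    simp only [mutate, Sum.inl.injEq, hp, hq, or_self, ite_false]
    set x := M (.inl p) k
    set y := M (.inl k) q
    set x' := M (.inl q) k
    set y' := M (.inl k) p
    have hT := two_mul_sign_mul_max x y
    have hT' := two_mul_sign_mul_max x' y'
    have hpk := h p k
    have hqk := h q k
    have hpk_abs := mul_abs_eq_of_mul_eq_neg (hS p) (hS k) hpk
    have hqk_abs := mul_abs_eq_of_mul_eq_neg (hS q) (hS k) hqk
    -- in the form `|x| y + x |y|` the correction terms are bilinear, so skewness passes through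
    have h2 : 2 * (S p * (x.sign * max (x * y) 0)) + 2 * (S q * (x'.sign * max (x' * y') 0))
        = 0 := by
      linear_combination S p * hT + S q * hT' + y * hpk_abs + |y| * hpk + y' * hqk_abs
        + |y'| * hqk
    linarith [h p q]

variable {κ' : Type} [DecidableEq κ'] {f : κ' → κ}

theorem mutate_submatrix (hf : f.Injective) (k : κ') (M : Matrix (κ ⊕ κ) κ ℤ) :
    (mutate (f k) M).submatrix (Sum.map f f) f = mutate k (M.submatrix (Sum.map f f) f) := by
  ext (i | i) j <;> simp [mutate, hf.eq_iff]

theorem mutateSeq_submatrix (hf : f.Injective) (L : List κ') (M : Matrix (κ ⊕ κ) κ ℤ) :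
    (mutateSeq (L.map f) M).submatrix (Sum.map f f) f
      = mutateSeq L (M.submatrix (Sum.map f f) f) := by
  induction L generalizing M with
  | nil => rfl
  | cons k L ih => simp only [List.map_cons, mutateSeq_cons, ih, mutate_submatrix hf]

theorem fromRows_one_submatrix (hf : f.Injective) (B : Matrix κ κ ℤ) :
    (Matrix.fromRows B 1).submatrix (Sum.map f f) f = Matrix.fromRows (B.submatrix f f) 1 := by
  ext (i | i) j <;> simp [Matrix.one_apply, hf.eq_iff]

theorem Cmat_submatrix (hf : f.Injective) (B : Matrix κ κ ℤ) (L : List κ') (i j : κ') :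
    Cmat (B.submatrix f f) L i j
      = mutateSeq (L.map f) (Matrix.fromRows B 1) (.inr (f i)) (f j) := by
  rw [Cmat, ← fromRows_one_submatrix hf, ← mutateSeq_submatrix hf]
  rfl

end

lemma sign_mul_max_of_nonneg {c : ℤ} (hc : 0 ≤ c) (y : ℤ) :
    c.sign * max (c * y) 0 = c * max y 0 := by
  rcases hc.lt_or_eq with hc | rfl
  · rw [Int.sign_eq_one_of_pos hc, one_mul, mul_max_of_nonneg _ _ hc.le, mul_zero]
  · simp

lemma nonpos_of_mul_eq_neg_mul {a b x y : ℤ} (ha : 0 < a) (hb : 0 ≤ b) (hy : 0 ≤ y)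
    (h : a * x = -(b * y)) : x ≤ 0 := by
  nlinarith

lemma nonneg_of_mul_eq_neg_mul {a b x y : ℤ} (ha : 0 < a) (hb : 0 ≤ b) (hy : y ≤ 0)
    (h : a * x = -(b * y)) : 0 ≤ x := by
  nlinarith

section

variable {α β : Type} [Fintype α] [DecidableEq β]

/-- `M = [[B₁', B₃'], [B₂ * C₁, B₄'], [C₁, 0], [0, 1]]` with principal part skew-symmetrizable
by `S`. -/
structure BlockForm (S : α ⊕ β → ℤ) (B₂ : Matrix β α ℤ)
    (M : Matrix ((α ⊕ β) ⊕ (α ⊕ β)) (α ⊕ β) ℤ) : Prop where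
  skew : ∀ p q, S p * M (.inl p) q = -(S q * M (.inl q) p)
  bLowerLeft_eq : ∀ i j, M (.inl (.inr i)) (.inl j) = ∑ l, B₂ i l * M (.inr (.inl l)) (.inl j)
  cUpperRight_eq_zero : ∀ i j, M (.inr (.inl i)) (.inr j) = 0
  cLowerLeft_eq_zero : ∀ i j, M (.inr (.inr i)) (.inl j) = 0
  cLowerRight_eq_one : ∀ i j, M (.inr (.inr i)) (.inr j) = if i = j then 1 else 0

variable {S : α ⊕ β → ℤ} {B₂ : Matrix β α ℤ} {M : Matrix ((α ⊕ β) ⊕ (α ⊕ β)) (α ⊕ β) ℤ}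

namespace BlockForm

theorem fromRows_one [DecidableEq α] {B : Matrix (α ⊕ β) (α ⊕ β) ℤ}
    (hskew : ∀ i j, S i * B i j = -(S j * B j i)) :
    BlockForm S (B.submatrix .inr .inl) (Matrix.fromRows B 1) where
  skew := hskew
  bLowerLeft_eq i j := by simp [Matrix.one_apply]
  cUpperRight_eq_zero i j := by simp
  cLowerLeft_eq_zero i j := by simp
  cLowerRight_eq_one i j := by simp [Matrix.one_apply]

theorem bLowerLeft_nonneg (h : BlockForm S B₂ M) (hB₂ : ∀ i j, 0 ≤ B₂ i j) {j : α}
    (hj : ∀ l, 0 ≤ M (.inr (.inl l)) (.inl j)) (i : β) : 0 ≤ M (.inl (.inr i)) (.inl j) := by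
  rw [h.bLowerLeft_eq]
  exact Finset.sum_nonneg fun l _ => mul_nonneg (hB₂ i l) (hj l)

theorem bLowerLeft_nonpos (h : BlockForm S B₂ M) (hB₂ : ∀ i j, 0 ≤ B₂ i j) {j : α}
    (hj : ∀ l, M (.inr (.inl l)) (.inl j) ≤ 0) (i : β) : M (.inl (.inr i)) (.inl j) ≤ 0 := by
  rw [h.bLowerLeft_eq]
  exact Finset.sum_nonpos fun l _ => mul_nonpos_of_nonneg_of_nonpos (hB₂ i l) (hj l)

theorem mutate_inl [DecidableEq α] (h : BlockForm S B₂ M) (hS : ∀ i, 0 < S i)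
    (hB₂ : ∀ i j, 0 ≤ B₂ i j) {k : α} (hk : ∀ l, 0 ≤ M (.inr (.inl l)) (.inl k)) :
    BlockForm S B₂ (mutate (.inl k) M) where
  skew := mutate_skew (fun i => (hS i).le) h.skew (.inl k)
  bLowerLeft_eq i j := by
    by_cases hj : j = k
    · subst hj
      simp [mutate, h.bLowerLeft_eq, Finset.sum_neg_distrib]
    · have hne : (Sum.inl j : α ⊕ β) ≠ .inl k := by simpa using hj
      simp only [mutate, reduceCtorEq, hne, or_self, ite_false]
      rw [sign_mul_max_of_nonneg (h.bLowerLeft_nonneg hB₂ hk i), h.bLowerLeft_eq, h.bLowerLeft_eq,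
        Finset.sum_mul, ← Finset.sum_add_distrib]
      refine Finset.sum_congr rfl fun l _ => ?_
      rw [sign_mul_max_of_nonneg (hk l)]
      ring
  cUpperRight_eq_zero i j := by
    have hB₃ : M (.inl (.inl k)) (.inr j) ≤ 0 :=
      nonpos_of_mul_eq_neg_mul (hS _) (hS _).le (h.bLowerLeft_nonneg hB₂ hk j) (h.skew _ _)
    simp only [mutate, reduceCtorEq, or_self, ite_false, h.cUpperRight_eq_zero, zero_add]
    rw [max_eq_right (mul_nonpos_of_nonneg_of_nonpos (hk i) hB₃), mul_zero]
  cLowerLeft_eq_zero i j := by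
    simp [mutate, h.cLowerLeft_eq_zero]
  cLowerRight_eq_one i j := by
    simp [mutate, h.cLowerRight_eq_one, h.cLowerLeft_eq_zero]

theorem mutateSeq_inl [DecidableEq α] (h : BlockForm S B₂ M) (hS : ∀ i, 0 < S i)
    (hB₂ : ∀ i j, 0 ≤ B₂ i j) (L : List α)
    (hgreen : ∀ (t : ℕ) (ht : t < L.length) (l : α),
      0 ≤ mutateSeq ((L.take t).map .inl) M (.inr (.inl l)) (.inl (L.get ⟨t, ht⟩))) :
    BlockForm S B₂ (mutateSeq (L.map .inl) M) := by
  induction L generalizing M with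
  | nil => exact h
  | cons k L ih =>
    refine ih (h.mutate_inl hS hB₂ (hgreen 0 (by simp))) fun t ht => ?_
    simpa [mutateSeq_cons] using hgreen (t + 1) (by simpa using ht)

end BlockForm

end

/-- After running a maximal green sequence of the top-left block `B₁` on `[B; I]`
(with nonnegative bottom-left block `B₂`), the mutated matrix has the block shape
`[[B₁', B₃'], [B₂', B₄'], [C₁, 0], [0, I]]` with `B₂' ≤ 0`, `B₃' ≥ 0` and `C₁ ≤ 0`. -/
theorem block_shape_after_mgs {n m : ℕ}
    (B : Matrix (Fin n ⊕ Fin m) (Fin n ⊕ Fin m) ℤ)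
    (S : Fin n ⊕ Fin m → ℤ) (hS : ∀ i, 0 < S i)
    (hskew : ∀ i j, S i * B i j = -(S j * B j i))
    (hB₂ : ∀ (i : Fin m) (j : Fin n), 0 ≤ B (Sum.inr i) (Sum.inl j))
    (ks : List (Fin n))
    (hks : IsMGS (fun i j => B (Sum.inl i) (Sum.inl j)) ks) :
    letI M := mutateSeq (ks.map Sum.inl) (Matrix.fromRows B 1)
    (∀ (i : Fin m) (j : Fin n), M (Sum.inl (Sum.inr i)) (Sum.inl j) ≤ 0) ∧
    (∀ (i : Fin n) (j : Fin m), 0 ≤ M (Sum.inl (Sum.inl i)) (Sum.inr j)) ∧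
    (∀ (i j : Fin n), M (Sum.inr (Sum.inl i)) (Sum.inl j) ≤ 0) ∧
    (∀ (i : Fin n) (j : Fin m), M (Sum.inr (Sum.inl i)) (Sum.inr j) = 0) ∧
    (∀ (i : Fin m) (j : Fin n), M (Sum.inr (Sum.inr i)) (Sum.inl j) = 0) ∧
    (∀ (i j : Fin m), M (Sum.inr (Sum.inr i)) (Sum.inr j) = if i = j then 1 else 0) := by
  obtain ⟨hgreen, hred⟩ := hks
  have hC := Cmat_submatrix Sum.inl_injective B
  have hform := (BlockForm.fromRows_one hskew).mutateSeq_inl hS hB₂ ks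
    fun t ht l => hC _ _ _ ▸ hgreen t ht l
  have hC₁ : ∀ i j, mutateSeq (ks.map Sum.inl) (Matrix.fromRows B 1)
      (Sum.inr (Sum.inl i)) (Sum.inl j) ≤ 0 := fun i j => hC _ _ _ ▸ hred i j
  have hB₂' := fun i j => hform.bLowerLeft_nonpos hB₂ (fun l => hC₁ l j) i
  have hB₃' := fun i j => nonneg_of_mul_eq_neg_mul (hS _) (hS _).le (hB₂' j i) (hform.skew _ _)
  exact ⟨hB₂', hB₃', hC₁, hform.cUpperRight_eq_zero, hform.cLowerLeft_eq_zero, hform.cLowerRight_eq_one⟩
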